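/- For every integer n ≥ 1: 27·σ₇(n) = 21(2n−1)·σ₅(n) + 7·σ₃(n) − σ₁(n) + 168·Σ_{i+j=n} (3·σ₁(i)·σ₅(j) + 5·σ₃(i)·σ₃(j)), where the sum is over ordered pairs of positive integers (i,j) with i + j = n. (This is the q-coefficient identity obtained from 9E₈ = 2E₂E₆ + E₄² + (2πi/3)·δ₆E₆, stated here with the correct middle term (7σ₃(n) − σ₁(n))/3 and cleared denominators.) -/

import Mathlib

/-!
Liouville's elementary method. Sum `h (a + b) - h (a - b)`, for an even `h`, over the positive
solutions of `a x + b y = n`. The involution `(a, b, x, y) ↦ (b, a, y, x)` and the shear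
`(a, b, x, y) ↦ (a, a + b, x - y, y)`, a bijection from `y < x` onto `a < b`, cancel everything
except the solutions with `x = y` or `a = b`, which are counted through the factorizations of `n`.
For `h t = t ^ 6` the binomial theorem turns the left side into `24 Σ a b⁵ + 40 Σ a³ b³`, that is
into the two convolution sums, and Faulhaber's formula for `Σ j⁶` turns the right side into
divisor power sums.
-/

/-- the divisor power sum `σ_k(n) = Σ_{d∣n} d^k` -/
def sigmaNat (k n : ℕ) : ℕ := ∑ d ∈ n.divisors, d ^ k

open Finset

theorem Finset.sum_comp_of_involutive {ι M : Type*} [AddCommMonoid M] {s : Finset ι}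
    {σ : ι → ι} (hσ : Function.Involutive σ) (hs : ∀ i ∈ s, σ i ∈ s) (f : ι → M) :
    ∑ i ∈ s, f (σ i) = ∑ i ∈ s, f i :=
  sum_nbij' σ σ hs hs (fun i _ => hσ i) (fun i _ => hσ i) fun _ _ => rfl

theorem Finset.sum_filter_comp_of_involutive {ι M : Type*} [AddCommMonoid M] {s : Finset ι}
    {σ : ι → ι} (hσ : Function.Involutive σ) (hs : ∀ i ∈ s, σ i ∈ s) (P : ι → Prop)
    [DecidablePred P] (f : ι → M) :
    ∑ i ∈ s with P (σ i), f (σ i) = ∑ i ∈ s with P i, f i := by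
  simp only [sum_filter]
  exact sum_comp_of_involutive hσ hs fun i => if P i then f i else 0

theorem Finset.sum_eq_sum_lt_add_sum_gt_add_sum_eq {ι α M : Type*} [AddCommMonoid M]
    [LinearOrder α] (s : Finset ι) (u v : ι → α) (f : ι → M) :
    ∑ i ∈ s, f i = ∑ i ∈ s with u i < v i, f i + ∑ i ∈ s with v i < u i, f i +
      ∑ i ∈ s with u i = v i, f i := by
  simp only [sum_filter, ← sum_add_distrib]
  refine sum_congr rfl fun i _ => ?_
  rcases lt_trichotomy (u i) (v i) with h | h | h
  · simp [h, h.not_gt, h.ne]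
  · simp [h]
  · simp [h, h.not_gt, h.ne']

namespace SigmaConvolution

/-- A positive solution of `a x + b y = n` is stored as `((a, x), (b, y))`: a factorization of
some `i` next to one of `n - i`. -/
def quadruples (n : ℕ) : Finset ((ℕ × ℕ) × ℕ × ℕ) :=
  (Ico 1 n).biUnion fun i => i.divisorsAntidiagonal ×ˢ (n - i).divisorsAntidiagonal

@[simp]
theorem mem_quadruples {n a x b y : ℕ} :
    ((a, x), (b, y)) ∈ quadruples n ↔ a * x + b * y = n ∧ a ≠ 0 ∧ x ≠ 0 ∧ b ≠ 0 ∧ y ≠ 0 := by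
  simp only [quadruples, mem_biUnion, mem_Ico, mem_product, Nat.mem_divisorsAntidiagonal]
  constructor
  · rintro ⟨i, -, ⟨rfl, hax⟩, hby, hi⟩
    rw [← hby] at hi
    exact ⟨by omega, left_ne_zero_of_mul hax, right_ne_zero_of_mul hax,
      left_ne_zero_of_mul hi, right_ne_zero_of_mul hi⟩
  · rintro ⟨he, ha, hx, hb, hy⟩
    have hax := mul_ne_zero ha hx
    have hby := mul_ne_zero hb hy
    exact ⟨a * x, by omega, ⟨rfl, hax⟩, by omega, by omega⟩

theorem sum_quadruples_mul {R : Type*} [CommSemiring R] (n : ℕ) (f g : ℕ → R) :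
    ∑ p ∈ quadruples n, f p.1.1 * g p.2.1 =
      ∑ i ∈ Ico 1 n, (∑ d ∈ i.divisors, f d) * ∑ d ∈ (n - i).divisors, g d := by
  rw [quadruples, sum_biUnion]
  · refine sum_congr rfl fun i _ => ?_
    rw [sum_product, ← Nat.sum_divisorsAntidiagonal (fun d _ => f d),
      ← Nat.sum_divisorsAntidiagonal (fun d _ => g d), sum_mul_sum]
  · intro i _ j _ hij
    simp only [Function.onFun, disjoint_left, mem_product, Nat.mem_divisorsAntidiagonal]
    rintro p ⟨⟨hi, -⟩, -⟩ ⟨⟨hj, -⟩, -⟩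
    exact hij (hi.symm.trans hj)

theorem swap_mem_quadruples {n : ℕ} {p : (ℕ × ℕ) × ℕ × ℕ} (hp : p ∈ quadruples n) :
    p.swap ∈ quadruples n := by
  obtain ⟨⟨a, x⟩, b, y⟩ := p
  simp only [Prod.swap_prod_mk, mem_quadruples] at hp ⊢
  omega

theorem map_swap_mem_quadruples {n : ℕ} {p : (ℕ × ℕ) × ℕ × ℕ} (hp : p ∈ quadruples n) :
    Prod.map Prod.swap Prod.swap p ∈ quadruples n := by
  obtain ⟨⟨a, x⟩, b, y⟩ := p
  simp only [Prod.map_apply, Prod.swap_prod_mk, mem_quadruples] at hp ⊢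
  refine ⟨?_, by tauto⟩
  rw [← hp.1]
  ring

theorem sum_quadruples_filter_swap {M : Type*} [AddCommMonoid M] (n : ℕ)
    (P : (ℕ × ℕ) × ℕ × ℕ → Prop) [DecidablePred P] (f : (ℕ × ℕ) × ℕ × ℕ → M) :
    ∑ p ∈ quadruples n with P p.swap, f p.swap = ∑ p ∈ quadruples n with P p, f p :=
  sum_filter_comp_of_involutive Prod.swap_swap (fun _ => swap_mem_quadruples) P f

section

variable {M : Type*} [AddCommMonoid M] (n : ℕ)

theorem sum_quadruples_shear (f : (ℕ × ℕ) × ℕ × ℕ → M) :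
    ∑ p ∈ quadruples n with p.2.2 < p.1.2, f ((p.1.1, p.1.2 - p.2.2), (p.1.1 + p.2.1, p.2.2)) =
      ∑ p ∈ quadruples n with p.1.1 < p.2.1, f p := by
  refine sum_nbij' (fun p => ((p.1.1, p.1.2 - p.2.2), (p.1.1 + p.2.1, p.2.2)))
    (fun p => ((p.1.1, p.1.2 + p.2.2), (p.2.1 - p.1.1, p.2.2))) ?_ ?_ ?_ ?_ fun _ _ => rfl
  · rintro ⟨⟨a, x⟩, b, y⟩
    simp only [mem_filter, mem_quadruples]
    rintro ⟨⟨he, ha, hx, hb, hy⟩, hyx⟩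
    refine ⟨⟨?_, ha, by omega, by omega, hy⟩, by omega⟩
    zify [hyx.le] at he ⊢
    linear_combination he
  · rintro ⟨⟨a, x⟩, b, y⟩
    simp only [mem_filter, mem_quadruples]
    rintro ⟨⟨he, ha, hx, hb, hy⟩, hab⟩
    refine ⟨⟨?_, ha, by omega, by omega, hy⟩, by omega⟩
    zify [hab.le] at he ⊢
    linear_combination he
  · rintro ⟨⟨a, x⟩, b, y⟩ hp
    simp only [mem_filter] at hp
    ext <;> simp only <;> omega
  · rintro ⟨⟨a, x⟩, b, y⟩ hp
    simp only [mem_filter] at hp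
    ext <;> simp only <;> omega

theorem sum_quadruples_filter_snd_eq (f : (ℕ × ℕ) × ℕ × ℕ → M) :
    ∑ p ∈ quadruples n with p.1.2 = p.2.2, f p =
      ∑ q ∈ n.divisorsAntidiagonal, ∑ b ∈ Ico 1 q.1, f ((q.1 - b, q.2), (b, q.2)) := by
  rw [sum_sigma']
  refine sum_nbij' (fun p => ⟨(p.1.1 + p.2.1, p.1.2), p.2.1⟩)
    (fun q => ((q.1.1 - q.2, q.1.2), (q.2, q.1.2))) ?_ ?_ ?_ ?_ ?_
  · rintro ⟨⟨a, x⟩, b, y⟩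
    simp only [mem_filter, mem_quadruples, mem_sigma, Nat.mem_divisorsAntidiagonal, mem_Ico]
    rintro ⟨⟨he, ha, hx, hb, hy⟩, rfl⟩
    have hax := mul_ne_zero ha hx
    exact ⟨⟨by rw [← he]; ring, by omega⟩, by omega, by omega⟩
  · rintro ⟨⟨e, m⟩, b⟩
    simp only [mem_filter, mem_quadruples, mem_sigma, Nat.mem_divisorsAntidiagonal, mem_Ico]
    rintro ⟨⟨he, hn⟩, hb, hbe⟩
    have hm : m ≠ 0 := right_ne_zero_of_mul (he ▸ hn)
    refine ⟨⟨?_, by omega, hm, by omega, hm⟩, trivial⟩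
    zify [hbe.le] at he ⊢
    linear_combination he
  · rintro ⟨⟨a, x⟩, b, y⟩ hp
    simp only [mem_filter] at hp
    ext <;> simp only <;> omega
  · rintro ⟨⟨e, m⟩, b⟩ hq
    simp only [mem_sigma, mem_Ico] at hq
    simp only [Sigma.mk.injEq, Prod.mk.injEq, heq_eq_eq, and_true]
    omega
  · rintro ⟨⟨a, x⟩, b, y⟩ hp
    simp only [mem_filter] at hp
    simp only [Nat.add_sub_cancel, hp.2]

end

section

variable {R : Type*} [AddCommGroup R] (n : ℕ) {h : ℤ → R}

theorem sum_quadruples_comp_add :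
    ∑ p ∈ quadruples n, h (p.1.1 + p.2.1) =
      2 • ∑ p ∈ quadruples n with p.1.1 < p.2.1, h p.2.1 +
        ∑ p ∈ quadruples n with p.1.2 = p.2.2, h (p.1.1 + p.2.1) := by
  have swapped : ∑ p ∈ quadruples n with p.1.2 < p.2.2, h (p.1.1 + p.2.1) =
      ∑ p ∈ quadruples n with p.2.2 < p.1.2, h (p.1.1 + p.2.1) := by
    rw [← sum_quadruples_filter_swap]
    simp only [Prod.fst_swap, Prod.snd_swap, add_comm]
  have sheared := sum_quadruples_shear n fun p => h p.2.1
  push_cast at sheared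
  rw [sum_eq_sum_lt_add_sum_gt_add_sum_eq _ (fun p => p.1.2) (fun p => p.2.2), swapped,
    sheared, two_smul]

theorem sum_quadruples_comp_sub (hh : Function.Even h) :
    ∑ p ∈ quadruples n, h (p.1.1 - p.2.1) =
      2 • ∑ p ∈ quadruples n with p.2.2 < p.1.2, h p.2.1 +
        ∑ p ∈ quadruples n with p.1.1 = p.2.1, h (p.1.1 - p.2.1) := by
  have swapped : ∑ p ∈ quadruples n with p.2.1 < p.1.1, h (p.1.1 - p.2.1) =
      ∑ p ∈ quadruples n with p.1.1 < p.2.1, h (p.1.1 - p.2.1) := by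
    rw [← sum_quadruples_filter_swap]
    exact sum_congr rfl fun p _ => by rw [Prod.fst_swap, Prod.snd_swap, ← neg_sub, hh]
  have sheared := sum_quadruples_shear n fun p => h (p.1.1 - p.2.1)
  push_cast at sheared
  simp only [sub_add_cancel_left, hh _] at sheared
  rw [sum_eq_sum_lt_add_sum_gt_add_sum_eq _ (fun p => p.1.1) (fun p => p.2.1), swapped,
    ← sheared, two_smul]

theorem sum_quadruples_sub_eq_sum_diag (hh : Function.Even h) :
    ∑ p ∈ quadruples n, (h (p.1.1 + p.2.1) - h (p.1.1 - p.2.1)) =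
      ∑ p ∈ quadruples n with p.1.2 = p.2.2, (h (p.1.1 + p.2.1) + 2 • h p.2.1) -
        ∑ p ∈ quadruples n with p.1.1 = p.2.1, (h (p.1.1 - p.2.1) + 2 • h p.2.1) := by
  have cross : ∑ p ∈ quadruples n with p.1.2 < p.2.2, h p.2.1 =
      ∑ p ∈ quadruples n with p.2.1 < p.1.1, h p.2.1 :=
    calc _ = ∑ p ∈ quadruples n with p.2.2 < p.1.2, h p.1.1 :=
          sum_quadruples_filter_swap n (fun p => p.2.2 < p.1.2) fun p => h p.1.1
      _ = ∑ p ∈ quadruples n with p.1.1 < p.2.1, h p.1.1 :=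
          sum_quadruples_shear n fun p => h p.1.1
      _ = _ := sum_quadruples_filter_swap n (fun p => p.2.1 < p.1.1) fun p => h p.2.1
  have by_xy := sum_eq_sum_lt_add_sum_gt_add_sum_eq (quadruples n) (fun p => p.1.2)
    (fun p => p.2.2) fun p => h p.2.1
  have by_ab := sum_eq_sum_lt_add_sum_gt_add_sum_eq (quadruples n) (fun p => p.1.1)
    (fun p => p.2.1) fun p => h p.2.1
  rw [sum_sub_distrib, sum_quadruples_comp_add, sum_quadruples_comp_sub n hh, sum_add_distrib,
    sum_add_distrib, ← smul_sum, ← smul_sum]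
  linear_combination (norm := abel) 2 • (by_xy - by_ab + cross)

theorem sum_quadruples_sub_eq (hh : Function.Even h) :
    ∑ p ∈ quadruples n, (h (p.1.1 + p.2.1) - h (p.1.1 - p.2.1)) =
      ∑ q ∈ n.divisorsAntidiagonal, ∑ b ∈ Ico 1 q.1,
        (h q.1 + 2 • h b - (h 0 + 2 • h q.2)) := by
  have transposed := sum_filter_comp_of_involutive (s := quadruples n)
    (σ := Prod.map Prod.swap Prod.swap) (fun _ => rfl) (fun _ => map_swap_mem_quadruples)
    (fun p => p.1.1 = p.2.1) fun p => h (p.1.1 - p.2.1) + 2 • h p.2.1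
  rw [sum_quadruples_sub_eq_sum_diag n hh, ← transposed]
  simp only [Prod.map_fst, Prod.map_snd, Prod.fst_swap]
  rw [sum_quadruples_filter_snd_eq, sum_quadruples_filter_snd_eq, ← sum_sub_distrib]
  refine sum_congr rfl fun q _ => ?_
  rw [← sum_sub_distrib]
  refine sum_congr rfl fun b hb => ?_
  rw [Nat.cast_sub (mem_Ico.mp hb).2.le, sub_add_cancel, sub_self]

end

theorem sum_range_pow_six {R : Type*} [CommRing R] (m : ℕ) :
    42 * ∑ j ∈ range m, (j : R) ^ 6 =
      6 * m ^ 7 - 21 * m ^ 6 + 21 * m ^ 5 - 7 * m ^ 3 + m := by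
  induction m with
  | zero => simp
  | succ m ih =>
    rw [sum_range_succ, mul_add, ih]
    push_cast
    ring

theorem sum_quadruples_pow_six_sub_eq_sum_mul (n : ℕ) :
    ∑ p ∈ quadruples n, (((p.1.1 : ℤ) + p.2.1) ^ 6 - ((p.1.1 : ℤ) - p.2.1) ^ 6) =
      24 * ∑ p ∈ quadruples n, (p.1.1 : ℤ) * (p.2.1 : ℤ) ^ 5 +
        40 * ∑ p ∈ quadruples n, (p.1.1 : ℤ) ^ 3 * (p.2.1 : ℤ) ^ 3 := by
  have swapped : ∑ p ∈ quadruples n, (p.1.1 : ℤ) ^ 5 * p.2.1 =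
      ∑ p ∈ quadruples n, (p.1.1 : ℤ) * (p.2.1 : ℤ) ^ 5 := by
    rw [← sum_comp_of_involutive Prod.swap_swap fun _ => swap_mem_quadruples]
    exact sum_congr rfl fun p _ => mul_comm _ _
  have binomial : ∀ a b : ℤ, (a + b) ^ 6 - (a - b) ^ 6 =
      12 * (a ^ 5 * b) + 12 * (a * b ^ 5) + 40 * (a ^ 3 * b ^ 3) := fun a b => by ring
  simp only [binomial, sum_add_distrib, ← mul_sum, swapped]
  ring

theorem sum_quadruples_pow_six_sub_eq_sigma (n : ℕ) :
    21 * ∑ p ∈ quadruples n, (((p.1.1 : ℤ) + p.2.1) ^ 6 - ((p.1.1 : ℤ) - p.2.1) ^ 6) =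
      27 * sigmaNat 7 n - 21 * (2 * n - 1) * sigmaNat 5 n - 7 * sigmaNat 3 n + sigmaNat 1 n := by
  let F : ℕ → ℤ := fun e => 27 * e ^ 7 - 42 * e ^ 6 + 21 * e ^ 5 - 7 * e ^ 3 + e
  let G : ℕ → ℤ := fun m => 42 * m ^ 6 - 42 * n * m ^ 5
  have inner : ∀ q ∈ n.divisorsAntidiagonal,
      21 * ∑ b ∈ Ico 1 q.1, ((q.1 : ℤ) ^ 6 + 2 • (b : ℤ) ^ 6 - ((0 : ℤ) ^ 6 + 2 • (q.2 : ℤ) ^ 6)) =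
        F q.1 + G q.2 := by
    rintro ⟨e, m⟩ hq
    obtain ⟨hem, hn⟩ := Nat.mem_divisorsAntidiagonal.mp hq
    have he : 0 < e := Nat.pos_of_ne_zero (left_ne_zero_of_mul (hem ▸ hn))
    have faulhaber := sum_range_pow_six (R := ℤ) e
    rw [range_eq_Ico, sum_eq_sum_Ico_succ_bot he, zero_add, Nat.cast_zero, zero_pow (by norm_num),
      zero_add] at faulhaber
    simp only [F, G, sum_sub_distrib, sum_add_distrib, sum_const, Nat.card_Ico, ← mul_sum,
      nsmul_eq_mul, Nat.cast_sub he, ← hem]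
    push_cast
    linear_combination faulhaber
  have liouville := sum_quadruples_sub_eq n (h := fun t : ℤ => t ^ 6)
    fun t => (by decide : Even 6).neg_pow t
  beta_reduce at liouville
  rw [liouville, mul_sum, sum_congr rfl inner, sum_add_distrib,
    Nat.sum_divisorsAntidiagonal fun e _ => F e, Nat.sum_divisorsAntidiagonal' fun _ m => G m]
  push_cast [F, G, sigmaNat]
  simp only [sum_add_distrib, sum_sub_distrib, ← mul_sum, pow_one]
  ring

end SigmaConvolution

open SigmaConvolution in
theorem sigma_seven_identity_general (n : ℕ) :
    27 * (sigmaNat 7 n : ℤ) =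
      21 * (2 * (n : ℤ) - 1) * sigmaNat 5 n + 7 * sigmaNat 3 n - sigmaNat 1 n +
        168 * ∑ i ∈ Finset.Ico 1 n,
          (3 * (sigmaNat 1 i : ℤ) * sigmaNat 5 (n - i) +
            5 * (sigmaNat 3 i : ℤ) * sigmaNat 3 (n - i)) := by
  have convolution : ∑ i ∈ Ico 1 n,
      (3 * (sigmaNat 1 i : ℤ) * sigmaNat 5 (n - i) + 5 * (sigmaNat 3 i : ℤ) * sigmaNat 3 (n - i)) =
        3 * ∑ p ∈ quadruples n, (p.1.1 : ℤ) * (p.2.1 : ℤ) ^ 5 +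
          5 * ∑ p ∈ quadruples n, (p.1.1 : ℤ) ^ 3 * (p.2.1 : ℤ) ^ 3 := by
    rw [sum_quadruples_mul n (fun a => (a : ℤ)) fun b => (b : ℤ) ^ 5,
      sum_quadruples_mul n (fun a => (a : ℤ) ^ 3) fun b => (b : ℤ) ^ 3,
      mul_sum, mul_sum, ← sum_add_distrib]
    push_cast [sigmaNat, pow_one]
    ring_nf
  linear_combination 21 * sum_quadruples_pow_six_sub_eq_sum_mul n -
    sum_quadruples_pow_six_sub_eq_sigma n - 168 * convolution

/-- For every `n ≥ 1`, `27·σ₇(n) = 21(2n−1)·σ₅(n) + 7·σ₃(n) − σ₁(n)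
+ 168·Σ_{i+j=n, i,j≥1} (3·σ₁(i)·σ₅(j) + 5·σ₃(i)·σ₃(j))`. -/
theorem sigma_seven_identity (n : ℕ) (hn : 1 ≤ n) :
    27 * (sigmaNat 7 n : ℤ) =
      21 * (2 * (n : ℤ) - 1) * sigmaNat 5 n + 7 * sigmaNat 3 n - sigmaNat 1 n +
        168 * ∑ i ∈ Finset.Ico 1 n,
          (3 * (sigmaNat 1 i : ℤ) * sigmaNat 5 (n - i) +
            5 * (sigmaNat 3 i : ℤ) * sigmaNat 3 (n - i)) :=
  sigma_seven_identity_general n
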